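/- Hopf's lemma (existence of stable and unstable Jacobi fields): let K₀ ≥ 0 and let K : ℝ → ℝ be continuous with −K₀ ≤ K(t) ≤ 0 for all t. For each nonzero T ∈ ℝ let J_T : ℝ → ℝ denote the unique solution of J_T'' + K·J_T = 0 with J_T(0) = 1 and J_T(T) = 0. Then there exist functions J^s : ℝ → ℝ and J^u : ℝ → ℝ such that for every t ∈ ℝ, J_T(t) → J^s(t) as T → +∞ and J_T(t) → J^u(t) as T → −∞. -/

import Mathlib

/-!
For `K ≤ 0` a nonzero Jacobi field vanishes at most once, because `J J'` is nondecreasing: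
`(J J')' = J'² - K J² ≥ 0`. Hence `J_T > 0` on the side of `T` containing `0`, and evaluating the
Wronskian of `J_T` and `J_S` at `0` and at `T` gives `J_S'(0) - J_T'(0) = -J_T'(T) J_S(T)`. So the
initial slope `J_T'(0)` is increasing in `T > 0` and bounded by `J_{-1}'(0)`. A Jacobi field with
`J(0) = 1` depends affinely on its initial slope, so `J_T` converges pointwise as `T → ∞`; the case
`T → -∞` follows by reversing time.
-/

open Set Filter Topology

theorem HasDerivAt.nonpos_of_apply_eq_zero_of_nonneg_left {f : ℝ → ℝ} {f' a : ℝ}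
    (hf : HasDerivAt f f' a) (ha : f a = 0) (hleft : ∀ t < a, 0 ≤ f t) : f' ≤ 0 := by
  refine le_of_tendsto hf.tendsto_slope_zero_left ?_
  filter_upwards [self_mem_nhdsWithin] with t (ht : t < 0)
  rw [ha, sub_zero, smul_eq_mul]
  exact mul_nonpos_of_nonpos_of_nonneg (inv_nonpos.2 ht.le) (hleft _ (by linarith))

theorem MonotoneOn.exists_tendsto_atTop {α : Type*} [LinearOrder α] [NoMaxOrder α] {f : α → ℝ}
    {a : α} (hf : MonotoneOn f (Ioi a)) (hbdd : BddAbove (f '' Ioi a)) :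
    ∃ L, Tendsto f atTop (𝓝 L) :=
  ⟨_, tendsto_comp_val_Ioi_atTop.1 <|
    tendsto_atTop_ciSup (monotoneOn_iff_monotone.1 hf) (by rwa [← image_eq_range])⟩

structure IsJacobiField (K J J' : ℝ → ℝ) : Prop where
  hasDerivAt : ∀ t, HasDerivAt J (J' t) t
  hasDerivAt_deriv : ∀ t, HasDerivAt J' (-K t * J t) t

namespace IsJacobiField

variable {K J J' G G' G₁ G₁' G₂ G₂' : ℝ → ℝ} {C : ℝ}

theorem of_contDiff (hJ : ContDiff ℝ 2 J) (hJK : ∀ t, deriv (deriv J) t + K t * J t = 0) :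
    IsJacobiField K J (deriv J) where
  hasDerivAt t := (hJ.differentiable (by norm_num) t).hasDerivAt
  hasDerivAt_deriv t :=
    (hJ.differentiable_deriv_two t).hasDerivAt.congr_deriv (by linarith [hJK t])

theorem zero : IsJacobiField K 0 0 where
  hasDerivAt t := hasDerivAt_const t 0
  hasDerivAt_deriv t := (hasDerivAt_const t 0).congr_deriv (by simp)

theorem add (hJ : IsJacobiField K J J') (hG : IsJacobiField K G G') :
    IsJacobiField K (J + G) (J' + G') where
  hasDerivAt t := (hJ.hasDerivAt t).add (hG.hasDerivAt t)
  hasDerivAt_deriv t :=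
    ((hJ.hasDerivAt_deriv t).add (hG.hasDerivAt_deriv t)).congr_deriv (by simp only [Pi.add_apply]; ring)

theorem sub (hJ : IsJacobiField K J J') (hG : IsJacobiField K G G') :
    IsJacobiField K (J - G) (J' - G') where
  hasDerivAt t := (hJ.hasDerivAt t).sub (hG.hasDerivAt t)
  hasDerivAt_deriv t :=
    ((hJ.hasDerivAt_deriv t).sub (hG.hasDerivAt_deriv t)).congr_deriv (by simp only [Pi.sub_apply]; ring)

theorem const_smul (hJ : IsJacobiField K J J') (c : ℝ) : IsJacobiField K (c • J) (c • J') where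
  hasDerivAt t := (hJ.hasDerivAt t).const_smul c
  hasDerivAt_deriv t :=
    ((hJ.hasDerivAt_deriv t).const_smul c).congr_deriv
      (by simp only [Pi.smul_apply, smul_eq_mul]; ring)

theorem comp_neg (hJ : IsJacobiField K J J') :
    IsJacobiField (fun t => K (-t)) (fun t => J (-t)) (fun t => -J' (-t)) where
  hasDerivAt t :=
    ((hJ.hasDerivAt (-t)).comp t (hasDerivAt_neg t)).congr_deriv (by ring)
  hasDerivAt_deriv t :=
    ((hJ.hasDerivAt_deriv (-t)).comp t (hasDerivAt_neg t)).neg.congr_deriv (by ring)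

/-- The Jacobi equation is a linear system with bounded coefficients, hence globally Lipschitz. -/
theorem eq_of_apply_eq_of_apply_eq (hKC : ∀ t, |K t| ≤ C) (hJ : IsJacobiField K J J')
    (hG : IsJacobiField K G G') {t₀ : ℝ} (h : J t₀ = G t₀) (h' : J' t₀ = G' t₀) : J = G := by
  have hv (t : ℝ) : LipschitzWith (max 1 C.toNNReal) fun p : ℝ × ℝ => (p.2, -K t * p.1) := by
    refine (LipschitzWith.prod_snd.prodMk
      ((lipschitzWith_smul (-K t)).comp LipschitzWith.prod_fst)).weaken (max_le_max le_rfl ?_)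
    rw [mul_one, ← NNReal.coe_le_coe, coe_nnnorm, norm_neg,
      Real.coe_toNNReal _ ((abs_nonneg _).trans (hKC t))]
    exact hKC t
  have hsol := ODE_solution_unique_univ (s := fun _ => univ) (fun t => (hv t).lipschitzOnWith)
    (f := fun t => (J t, J' t)) (g := fun t => (G t, G' t))
    (fun t => ⟨(hJ.hasDerivAt t).prodMk (hJ.hasDerivAt_deriv t), trivial⟩)
    (fun t => ⟨(hG.hasDerivAt t).prodMk (hG.hasDerivAt_deriv t), trivial⟩) (Prod.ext h h')
  funext t
  exact congrArg Prod.fst (congrFun hsol t)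

theorem eq_zero_of_apply_eq_zero (hK : ∀ t, K t ≤ 0) (hKC : ∀ t, |K t| ≤ C)
    (hJ : IsJacobiField K J J') {a b : ℝ} (hab : a ≠ b) (ha : J a = 0) (hb : J b = 0) : J = 0 := by
  wlog hlt : a < b generalizing a b
  · exact this hab.symm hb ha (lt_of_le_of_ne (not_lt.1 hlt) hab.symm)
  have hprod (t : ℝ) : HasDerivAt (fun s => J s * J' s) (J' t ^ 2 - K t * J t ^ 2) t :=
    ((hJ.hasDerivAt t).mul (hJ.hasDerivAt_deriv t)).congr_deriv (by ring)
  have hmono : Monotone fun s => J s * J' s :=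
    monotone_of_deriv_nonneg (fun t => (hprod t).differentiableAt) fun t => by
      rw [(hprod t).deriv]
      nlinarith [hK t, sq_nonneg (J t), sq_nonneg (J' t)]
  have hprod_zero : ∀ t ∈ Icc a b, J t * J' t = 0 := fun t ht =>
    le_antisymm (by simpa [hb] using hmono ht.2) (by simpa [ha] using hmono ht.1)
  have hJ'_zero : ∀ t ∈ Ioo a b, J' t = 0 := by
    intro t ht
    have hconst : (fun s => J s * J' s) =ᶠ[𝓝 t] fun _ => 0 :=
      eventually_of_mem (Icc_mem_nhds ht.1 ht.2) hprod_zero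
    have := (hprod t).unique ((hasDerivAt_const t 0).congr_of_eventuallyEq hconst)
    nlinarith [hK t, sq_nonneg (J t), sq_nonneg (J' t)]
  obtain ⟨m, hm⟩ := nonempty_Ioo.2 hlt
  have hJm : J m = 0 := by
    obtain ⟨c, hc, hslope⟩ := exists_hasDerivAt_eq_slope J J' hm.1
      (fun t _ => (hJ.hasDerivAt t).continuousAt.continuousWithinAt) fun t _ => hJ.hasDerivAt t
    rw [hJ'_zero c ⟨hc.1, hc.2.trans hm.2⟩, ha, sub_zero, eq_comm, div_eq_zero_iff] at hslope
    exact hslope.resolve_right (sub_ne_zero.2 hm.1.ne')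
  exact hJ.eq_of_apply_eq_of_apply_eq hKC zero hJm (hJ'_zero m hm)

theorem pos_of_mem (hK : ∀ t, K t ≤ 0) (hKC : ∀ t, |K t| ≤ C) (hJ : IsJacobiField K J J')
    {s : Set ℝ} (hs : IsPreconnected s) {a b : ℝ} (ha : J a = 0) (has : a ∉ s) (hb : b ∈ s)
    (hJb : 0 < J b) {t : ℝ} (ht : t ∈ s) : 0 < J t := by
  by_contra! hJt
  obtain ⟨z, hz, hJz⟩ := hs.intermediate_value ht hb
    (fun x _ => (hJ.hasDerivAt x).continuousAt.continuousWithinAt) ⟨hJt, hJb.le⟩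
  have hJ0 := hJ.eq_zero_of_apply_eq_zero hK hKC (ne_of_mem_of_not_mem hz has) hJz ha
  simp [hJ0] at hJb

theorem wronskian_eq (hJ : IsJacobiField K J J') (hG : IsJacobiField K G G') (a b : ℝ) :
    J a * G' a - J' a * G a = J b * G' b - J' b * G b := by
  have hW (t : ℝ) : HasDerivAt (fun s => J s * G' s - J' s * G s) 0 t :=
    (((hJ.hasDerivAt t).mul (hG.hasDerivAt_deriv t)).sub
      ((hJ.hasDerivAt_deriv t).mul (hG.hasDerivAt t))).congr_deriv (by ring)
  exact is_const_of_deriv_eq_zero (fun t => (hW t).differentiableAt) (fun t => (hW t).deriv) a b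

theorem eq_add_mul_sub (hKC : ∀ t, |K t| ≤ C) (hJ : IsJacobiField K J J')
    (hG₁ : IsJacobiField K G₁ G₁') (hG₂ : IsJacobiField K G₂ G₂') {t₀ : ℝ} (h₁ : G₁ t₀ = J t₀)
    (h₂ : G₂ t₀ = J t₀) (hne : G₁' t₀ ≠ G₂' t₀) :
    J = fun t => G₁ t + (J' t₀ - G₁' t₀) / (G₂' t₀ - G₁' t₀) * (G₂ t - G₁ t) := by
  set c := (J' t₀ - G₁' t₀) / (G₂' t₀ - G₁' t₀)
  have hc : c * (G₂' t₀ - G₁' t₀) = J' t₀ - G₁' t₀ := div_mul_cancel₀ _ (sub_ne_zero.2 hne.symm)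
  refine hJ.eq_of_apply_eq_of_apply_eq hKC (hG₁.add ((hG₂.sub hG₁).const_smul c)) (t₀ := t₀)
    ?_ ?_
  · simp [h₁, h₂]
  · simp only [Pi.add_apply, Pi.smul_apply, Pi.sub_apply, smul_eq_mul]
    linarith

end IsJacobiField

structure IsJacobiFamily (K : ℝ → ℝ) (J J' : ℝ → ℝ → ℝ) : Prop where
  isJacobiField : ∀ T ≠ 0, IsJacobiField K (J T) (J' T)
  apply_zero : ∀ T ≠ 0, J T 0 = 1
  apply_self : ∀ T ≠ 0, J T T = 0

namespace IsJacobiFamily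

variable {K : ℝ → ℝ} {C : ℝ} {J J' : ℝ → ℝ → ℝ} {S T t : ℝ}

theorem comp_neg (hJ : IsJacobiFamily K J J') :
    IsJacobiFamily (fun t => K (-t)) (fun T t => J (-T) (-t)) (fun T t => -J' (-T) (-t)) where
  isJacobiField T hT := (hJ.isJacobiField (-T) (neg_ne_zero.2 hT)).comp_neg
  apply_zero T hT := by simpa using hJ.apply_zero (-T) (neg_ne_zero.2 hT)
  apply_self T hT := hJ.apply_self (-T) (neg_ne_zero.2 hT)

theorem pos_of_lt (hJ : IsJacobiFamily K J J') (hK : ∀ t, K t ≤ 0) (hKC : ∀ t, |K t| ≤ C)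
    (hT : 0 < T) (ht : t < T) : 0 < J T t :=
  (hJ.isJacobiField T hT.ne').pos_of_mem hK hKC isPreconnected_Iio (hJ.apply_self T hT.ne')
    (lt_irrefl T) (mem_Iio.2 hT) (by rw [hJ.apply_zero T hT.ne']; exact one_pos) ht

theorem pos_of_gt (hJ : IsJacobiFamily K J J') (hK : ∀ t, K t ≤ 0) (hKC : ∀ t, |K t| ≤ C)
    (hT : T < 0) (ht : T < t) : 0 < J T t :=
  (hJ.isJacobiField T hT.ne).pos_of_mem hK hKC isPreconnected_Ioi (hJ.apply_self T hT.ne)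
    (lt_irrefl T) (mem_Ioi.2 hT) (by rw [hJ.apply_zero T hT.ne]; exact one_pos) ht

theorem deriv_apply_self_neg (hJ : IsJacobiFamily K J J') (hK : ∀ t, K t ≤ 0)
    (hKC : ∀ t, |K t| ≤ C) (hT : 0 < T) : J' T T < 0 := by
  have hJT := hJ.isJacobiField T hT.ne'
  refine lt_of_le_of_ne ((hJT.hasDerivAt T).nonpos_of_apply_eq_zero_of_nonneg_left
    (hJ.apply_self T hT.ne') fun t ht => (hJ.pos_of_lt hK hKC hT ht).le) fun h => ?_
  have hzero := hJT.eq_of_apply_eq_of_apply_eq hKC IsJacobiField.zero (hJ.apply_self T hT.ne') h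
  simpa [hzero] using hJ.apply_zero T hT.ne'

theorem deriv_apply_zero_sub (hJ : IsJacobiFamily K J J') (hS : S ≠ 0) (hT : T ≠ 0) :
    J' S 0 - J' T 0 = -J' T T * J S T := by
  have hW := (hJ.isJacobiField T hT).wronskian_eq (hJ.isJacobiField S hS) 0 T
  rw [hJ.apply_zero T hT, hJ.apply_zero S hS, hJ.apply_self T hT] at hW
  linarith

theorem deriv_apply_zero_lt (hJ : IsJacobiFamily K J J') (hK : ∀ t, K t ≤ 0)
    (hKC : ∀ t, |K t| ≤ C) (hS : S ≠ 0) (hT : 0 < T) (hST : 0 < J S T) : J' T 0 < J' S 0 := by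
  have hW := hJ.deriv_apply_zero_sub hS hT.ne'
  nlinarith [hJ.deriv_apply_self_neg hK hKC hT]

theorem strictMonoOn_deriv_apply_zero (hJ : IsJacobiFamily K J J') (hK : ∀ t, K t ≤ 0)
    (hKC : ∀ t, |K t| ≤ C) : StrictMonoOn (fun T => J' T 0) (Ioi 0) := fun _ hT _ hS hTS =>
  hJ.deriv_apply_zero_lt hK hKC (ne_of_gt hS) hT (hJ.pos_of_lt hK hKC hS hTS)

theorem deriv_apply_zero_lt_of_neg (hJ : IsJacobiFamily K J J') (hK : ∀ t, K t ≤ 0)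
    (hKC : ∀ t, |K t| ≤ C) (hS : S < 0) (hT : 0 < T) : J' T 0 < J' S 0 :=
  hJ.deriv_apply_zero_lt hK hKC hS.ne hT (hJ.pos_of_gt hK hKC hS (hS.trans hT))

theorem exists_tendsto_atTop (hJ : IsJacobiFamily K J J') (hK : ∀ t, K t ≤ 0)
    (hKC : ∀ t, |K t| ≤ C) : ∃ Js : ℝ → ℝ, ∀ t, Tendsto (fun T => J T t) atTop (𝓝 (Js t)) := by
  obtain ⟨L, hL⟩ := (hJ.strictMonoOn_deriv_apply_zero hK hKC).monotoneOn.exists_tendsto_atTop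
    ⟨J' (-1) 0, by
      rintro _ ⟨T, hT, rfl⟩
      exact (hJ.deriv_apply_zero_lt_of_neg hK hKC neg_one_lt_zero hT).le⟩
  have hne : J' 1 0 ≠ J' (-1) 0 :=
    (hJ.deriv_apply_zero_lt_of_neg hK hKC neg_one_lt_zero one_pos).ne
  have hrep (T : ℝ) (hT : T ≠ 0) := (hJ.isJacobiField T hT).eq_add_mul_sub hKC
    (hJ.isJacobiField 1 one_ne_zero) (hJ.isJacobiField (-1) (by norm_num))
    (by rw [hJ.apply_zero 1 one_ne_zero, hJ.apply_zero T hT])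
    (by rw [hJ.apply_zero (-1) (by norm_num), hJ.apply_zero T hT]) hne
  refine ⟨fun t => J 1 t + (L - J' 1 0) / (J' (-1) 0 - J' 1 0) * (J (-1) t - J 1 t), fun t => ?_⟩
  refine ((((hL.sub_const _).div_const _).mul_const _).const_add _).congr' ?_
  filter_upwards [eventually_gt_atTop 0] with T hT
  rw [hrep T hT.ne']

theorem exists_tendsto_atBot (hJ : IsJacobiFamily K J J') (hK : ∀ t, K t ≤ 0)
    (hKC : ∀ t, |K t| ≤ C) : ∃ Ju : ℝ → ℝ, ∀ t, Tendsto (fun T => J T t) atBot (𝓝 (Ju t)) := by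
  obtain ⟨Ju, hJu⟩ := hJ.comp_neg.exists_tendsto_atTop (fun t => hK (-t)) fun t => hKC (-t)
  refine ⟨fun t => Ju (-t), fun t => ?_⟩
  simpa [Function.comp_def] using (hJu (-t)).comp tendsto_neg_atBot_atTop

end IsJacobiFamily

theorem hopf_stable_unstable_jacobi_fields_general
    (K₀ : ℝ) (K : ℝ → ℝ)
    (hKbound : ∀ t : ℝ, -K₀ ≤ K t ∧ K t ≤ 0)
    (JT : ℝ → ℝ → ℝ)
    (hJT : ∀ T : ℝ, T ≠ 0 → ContDiff ℝ 2 (JT T) ∧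
      (∀ t : ℝ, deriv (deriv (JT T)) t + K t * JT T t = 0) ∧ JT T 0 = 1 ∧ JT T T = 0) :
    ∃ Js Ju : ℝ → ℝ,
      (∀ t : ℝ, Filter.Tendsto (fun T => JT T t) Filter.atTop (nhds (Js t))) ∧
      (∀ t : ℝ, Filter.Tendsto (fun T => JT T t) Filter.atBot (nhds (Ju t))) := by
  have hJ : IsJacobiFamily K JT fun T => deriv (JT T) :=
    ⟨fun T hT => .of_contDiff (hJT T hT).1 (hJT T hT).2.1, fun T hT => (hJT T hT).2.2.1,
      fun T hT => (hJT T hT).2.2.2⟩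
  have hK (t : ℝ) : K t ≤ 0 := (hKbound t).2
  have hKC (t : ℝ) : |K t| ≤ K₀ := abs_le.2 ⟨(hKbound t).1, by linarith [hKbound t]⟩
  obtain ⟨Js, hJs⟩ := hJ.exists_tendsto_atTop hK hKC
  obtain ⟨Ju, hJu⟩ := hJ.exists_tendsto_atBot hK hKC
  exact ⟨Js, Ju, hJs, hJu⟩

/-- **Hopf's lemma: existence of the stable and unstable Jacobi fields.**
Let `K₀ ≥ 0` and `K : ℝ → ℝ` be continuous with `-K₀ ≤ K t ≤ 0` for all `t`. For each
`T ≠ 0` let `JT T : ℝ → ℝ` be the unique solution of the Jacobi equation with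
`JT T 0 = 1` and `JT T T = 0`. Then there exist functions `Js Ju : ℝ → ℝ` such that for
every `t`, `JT T t → Js t` as `T → +∞` and `JT T t → Ju t` as `T → −∞`. -/
theorem hopf_stable_unstable_jacobi_fields
    (K₀ : ℝ) (hK₀ : 0 ≤ K₀) (K : ℝ → ℝ) (hKcont : Continuous K)
    (hKbound : ∀ t : ℝ, -K₀ ≤ K t ∧ K t ≤ 0)
    (JT : ℝ → ℝ → ℝ)
    (hJT : ∀ T : ℝ, T ≠ 0 → ContDiff ℝ 2 (JT T) ∧
      (∀ t : ℝ, deriv (deriv (JT T)) t + K t * JT T t = 0) ∧ JT T 0 = 1 ∧ JT T T = 0) :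
    ∃ Js Ju : ℝ → ℝ,
      (∀ t : ℝ, Filter.Tendsto (fun T => JT T t) Filter.atTop (nhds (Js t))) ∧
      (∀ t : ℝ, Filter.Tendsto (fun T => JT T t) Filter.atBot (nhds (Ju t))) :=
  hopf_stable_unstable_jacobi_fields_general K₀ K hKbound JT hJT
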